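/- Let k ≥ 1 and m ≥ 2k be integers, and let φ^μ be an irreducible unitary matrix representation of S(m) with m_μ ≠ 0 on (ℂ^d)^{⊗m}, in PRIR form relative to the chain S(m) ⊃ S(m−1) ⊃ ⋯ ⊃ S(m−k), with basis indices written i_μ = (r_{μ/β}, i_β). Then the partial trace over the last k tensor factors satisfies tr_{m−k+1,…,m} E^μ_{(r_{μ/β},i_β),(r̃_{μ/β'},j_{β'})} = δ^{r_{μ/β}, r̃_{μ/β'}}·(m_μ/m_β)·E^β_{i_β j_β}, an operator acting on (ℂ^d)^{⊗(m−k)} built from the fixed matrix irrep φ^β of S(m−k). -/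

import Mathlib

open scoped BigOperators
open scoped Classical
open scoped ComplexOrder
open Matrix

noncomputable section

/-- Square matrices on the computational basis of `(ℂ^d)^{⊗ n}`. -/
abbrev Mat (d n : ℕ) := Matrix (Fin n → Fin d) (Fin n → Fin d) ℂ

/-- The unitary permuting the tensor factors according to `σ`. -/
def Vperm (d n : ℕ) (σ : Equiv.Perm (Fin n)) : Mat d n :=
  Matrix.of fun f g => if f ∘ σ = g then (1 : ℂ) else 0

/-- Orthogonal projector onto the maximally entangled state of factors `r` and `s`,
tensored with the identity on the remaining factors. -/
def Pplus (d n : ℕ) (r s : Fin n) : Mat d n :=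
  Matrix.of fun f g =>
    if f r = f s ∧ g r = g s ∧ ∀ t : Fin n, t ≠ r → t ≠ s → f t = g t
    then (1 : ℂ) / d else 0

/-- `V^{(k)} = d^k · P⁺_{n-2k+1,n} ⋯ P⁺_{n-k,n-k+1}` on `n = a + 2k` factors
(`a = n - 2k`), tensored with the identity on the remaining factors. -/
def Vk (d a k : ℕ) : Mat d (a + k + k) :=
  ((d : ℂ) ^ k) •
    ((List.finRange k).map fun j : Fin k =>
      Pplus d (a + k + k) ⟨a + (j : ℕ), by have := j.isLt; omega⟩
        ⟨a + k + k - 1 - (j : ℕ), by have := j.isLt; omega⟩).prod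

/-- Extension of an operator on the first `m` factors by the identity on the rest. -/
def extOp {d m n : ℕ} (h : m ≤ n) (X : Mat d m) : Mat d n :=
  Matrix.of fun f g =>
    if ∀ i : Fin n, m ≤ (i : ℕ) → f i = g i
    then X (fun i => f (Fin.castLE h i)) (fun i => g (Fin.castLE h i)) else 0

def splice {d a b : ℕ} (f : Fin a → Fin d) (t : Fin b → Fin d) : Fin (a + b) → Fin d :=
  fun i => if h : (i : ℕ) < a then f ⟨i, h⟩ else t ⟨(i : ℕ) - a, by have := i.isLt; omega⟩

/-- Partial trace over the last `b` tensor factors. -/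
def ptraceLast {d : ℕ} (a b : ℕ) (X : Mat d (a + b)) : Mat d a :=
  Matrix.of fun f g => ∑ t : Fin b → Fin d, X (splice f t) (splice g t)

def finLtEquiv {m n : ℕ} (h : m ≤ n) : Fin m ≃ {i : Fin n // (i : ℕ) < m} where
  toFun i := ⟨⟨(i : ℕ), lt_of_lt_of_le i.isLt h⟩, i.isLt⟩
  invFun j := ⟨(j.1 : ℕ), j.2⟩
  left_inv i := rfl
  right_inv j := rfl

/-- The embedding of `S(m)` into `S(n)`, acting on the first `m` letters. -/
def permExt {m n : ℕ} (h : m ≤ n) (σ : Equiv.Perm (Fin m)) : Equiv.Perm (Fin n) :=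
  σ.extendDomain (finLtEquiv h)

/-- A unitary irreducible matrix representation (Schur's criterion). -/
def IsUnitaryIrrep {G : Type*} [Group G] {e : ℕ}
    (φ : G →* Matrix (Fin e) (Fin e) ℂ) : Prop :=
  (∀ g, (φ g)ᴴ * φ g = 1) ∧
  ∀ X : Matrix (Fin e) (Fin e) ℂ, (∀ g, X * φ g = φ g * X) →
    ∃ c : ℂ, X = c • (1 : Matrix (Fin e) (Fin e) ℂ)

/-- Operator basis `E^μ_{ij} = (d_μ/m!) Σ_τ φ^μ_{ji}(τ⁻¹) V_τ` on the first `m` factors. -/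
def Eop (d m : ℕ) {e : ℕ} (φ : Equiv.Perm (Fin m) →* Matrix (Fin e) (Fin e) ℂ)
    (i j : Fin e) : Mat d m :=
  ((e : ℂ) / (Nat.factorial m : ℂ)) •
    ∑ τ : Equiv.Perm (Fin m), φ τ⁻¹ j i • Vperm d m τ

/-- Young projector `P_μ = Σ_i E^μ_{ii}`. -/
def Pop (d m : ℕ) {e : ℕ} (φ : Equiv.Perm (Fin m) →* Matrix (Fin e) (Fin e) ℂ) : Mat d m :=
  ∑ i : Fin e, Eop d m φ i i

/-- Schur–Weyl multiplicity `m_μ = tr(P_μ)/d_μ` (a real number). -/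
def multSW (d m : ℕ) {e : ℕ} (φ : Equiv.Perm (Fin m) →* Matrix (Fin e) (Fin e) ℂ) : ℝ :=
  (Matrix.trace (Pop d m φ)).re / (e : ℝ)

/-- A family of concrete unitary irreducible matrix representations of `S(a)`. -/
structure IrrepFamily (a : ℕ) where
  Label : Type
  [instFintype : Fintype Label]
  [instDecEq : DecidableEq Label]
  dim : Label → ℕ
  dim_pos : ∀ ℓ, 0 < dim ℓ
  rep : ∀ ℓ, Equiv.Perm (Fin a) →* Matrix (Fin (dim ℓ)) (Fin (dim ℓ)) ℂ
  irrep : ∀ ℓ, IsUnitaryIrrep (rep ℓ)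

attribute [instance] IrrepFamily.instFintype IrrepFamily.instDecEq

/-- An irreducible unitary representation of `S(a+k)` in PRIR form relative to the chain
`S(a+k) ⊃ ⋯ ⊃ S(a)`: the restriction to `S(a)` is block diagonal, the blocks being
indexed by branching paths, the block of every path ending at the irrep `α` of `S(a)`
being one and the same fixed matrix irrep `Φ.rep α`. -/
structure PRIRData (a k : ℕ) (Φ : IrrepFamily a) (e : ℕ) where
  rep : Equiv.Perm (Fin (a + k)) →* Matrix (Fin e) (Fin e) ℂ
  irrep : IsUnitaryIrrep rep
  Path : Type
  [instFintypePath : Fintype Path]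
  [instDecEqPath : DecidableEq Path]
  endOf : Path → Φ.Label
  basis : ((r : Path) × Fin (Φ.dim (endOf r))) ≃ Fin e
  block_diag : ∀ (h : Equiv.Perm (Fin a)) (r : Path) (l l' : Fin (Φ.dim (endOf r))),
      rep (permExt (Nat.le_add_right a k) h) (basis ⟨r, l⟩) (basis ⟨r, l'⟩)
        = Φ.rep (endOf r) h l l'
  block_off : ∀ (h : Equiv.Perm (Fin a)) (r r' : Path), r ≠ r' →
      ∀ (l : Fin (Φ.dim (endOf r))) (l' : Fin (Φ.dim (endOf r'))),
      rep (permExt (Nat.le_add_right a k) h) (basis ⟨r, l⟩) (basis ⟨r', l'⟩) = 0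

attribute [instance] PRIRData.instFintypePath PRIRData.instDecEqPath

/-- The number of paths `m_{μ/α}`, i.e. the multiplicity of `α` in the restriction. -/
def PRIRData.pathMult {a k : ℕ} {Φ : IrrepFamily a} {e : ℕ}
    (P : PRIRData a k Φ e) (α : Φ.Label) : ℕ :=
  Fintype.card {r : P.Path // P.endOf r = α}

/-- The basis operators
`F^{r_{μ/α} r_{ν/α}}_{i_μ j_ν} = (m_α/√(m_μ m_ν)) E^μ_{i_μ,(r,1_α)} V^{(k)} E^ν_{(s,1_α),j_ν}`. -/
def Fop (d a k : ℕ) (Φ : IrrepFamily a) {e e' : ℕ}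
    (P : PRIRData a k Φ e) (Q : PRIRData a k Φ e')
    (r : P.Path) (s : Q.Path) (i : Fin e) (j : Fin e') : Mat d (a + k + k) :=
  ((multSW d a (Φ.rep (P.endOf r)) /
      Real.sqrt (multSW d (a + k) P.rep * multSW d (a + k) Q.rep) : ℝ) : ℂ) •
    (extOp (Nat.le_add_right (a + k) k)
        (Eop d (a + k) P.rep i (P.basis ⟨r, ⟨0, Φ.dim_pos _⟩⟩)) *
      Vk d a k *
      extOp (Nat.le_add_right (a + k) k)
        (Eop d (a + k) Q.rep (Q.basis ⟨s, ⟨0, Φ.dim_pos _⟩⟩) j))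

/-- The projectors `F_μ(α) = Σ_{r_{μ/α}} Σ_{k_μ} F^{r r}_{k k}`. -/
def Fproj (d a k : ℕ) (Φ : IrrepFamily a) {e : ℕ}
    (P : PRIRData a k Φ e) (α : Φ.Label) : Mat d (a + k + k) :=
  ∑ r : {r : P.Path // P.endOf r = α}, ∑ i : Fin e, Fop d a k Φ P P r.1 r.1 i i

/-- Eigenvalues `λ_μ(α) = (k!·C(N,k)/d^N)·(m_μ d_α)/(m_α d_μ)` of the MPBT operator. -/
def lambdaEig (d a k : ℕ) (Φ : IrrepFamily a) {e : ℕ}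
    (P : PRIRData a k Φ e) (α : Φ.Label) : ℝ :=
  ((Nat.factorial k * Nat.choose (a + k) k : ℝ) / (d : ℝ) ^ (a + k)) *
    (multSW d (a + k) P.rep * (Φ.dim α : ℝ)) / (multSW d a (Φ.rep α) * (e : ℝ))

/-- A family of irreps of `S(a+k)` in PRIR form relative to `Φ`, one chosen
representative for each isomorphism class (pairwise non-isomorphic and complete). -/
structure PRIRFamily (a k : ℕ) (Φ : IrrepFamily a) where
  Label : Type
  [instFintype : Fintype Label]
  [instDecEq : DecidableEq Label]
  dim : Label → ℕ
  prir : ∀ ℓ, PRIRData a k Φ (dim ℓ)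
  noniso : ∀ ℓ ℓ', ℓ ≠ ℓ' → ∀ T : Matrix (Fin (dim ℓ)) (Fin (dim ℓ')) ℂ,
      (∀ σ, (prir ℓ).rep σ * T = T * (prir ℓ').rep σ) → T = 0
  complete : ∀ (e : ℕ) (ψ : Equiv.Perm (Fin (a + k)) →* Matrix (Fin e) (Fin e) ℂ),
      IsUnitaryIrrep ψ → ∃ ℓ, ∃ T : Matrix (Fin (dim ℓ)) (Fin e) ℂ,
        ∃ T' : Matrix (Fin e) (Fin (dim ℓ)) ℂ,
          T * T' = 1 ∧ T' * T = 1 ∧ ∀ σ, (prir ℓ).rep σ * T = T * ψ σ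

attribute [instance] PRIRFamily.instFintype PRIRFamily.instDecEq

/-- The signal states `σ_i` of the MPBT scheme, for a tuple `v` of (distinct) ports:
the ports are factors `0,…,a+k-1` and `B̃_j` (resp. `C_j`) is factor `a+k+j`. -/
def sigmaOp (d a k : ℕ) (v : Fin k → Fin (a + k)) : Mat d (a + k + k) :=
  ((1 : ℂ) / (d : ℂ) ^ a) •
    ((List.finRange k).map fun j : Fin k =>
      Pplus d (a + k + k) (Fin.castLE (Nat.le_add_right (a + k) k) (v j))
        ⟨a + k + (j : ℕ), by have := j.isLt; omega⟩).prod

/-- The MPBT operator `ρ = Σ_{i ∈ I} σ_i`. -/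
def rhoOp (d a k : ℕ) : Mat d (a + k + k) :=
  ∑ v : {v : Fin k → Fin (a + k) // Function.Injective v}, sigmaOp d a k v.1

/-- `P⁺_{A_i,C}`, tensored with the identity on the remaining ports. -/
def PplusTuple (d a k : ℕ) (v : Fin k → Fin (a + k)) : Mat d (a + k + k) :=
  ((List.finRange k).map fun j : Fin k =>
    Pplus d (a + k + k) (Fin.castLE (Nat.le_add_right (a + k) k) (v j))
      ⟨a + k + (j : ℕ), by have := j.isLt; omega⟩).prod

/-- The increasing enumeration of the ports not appearing in `v`. -/
def compEnum {a k : ℕ} (v : Fin k → Fin (a + k)) (hv : Function.Injective v) :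
    Fin a → Fin (a + k) := fun i =>
  (((Finset.image v Finset.univ)ᶜ.orderIsoOfFin (by
      rw [Finset.card_compl, Finset.card_image_of_injective _ hv, Finset.card_univ,
        Fintype.card_fin, Fintype.card_fin]
      omega)) i).1

/-- Placement of an operator on the tensor factors enumerated by `w`,
tensored with the identity on the remaining factors. -/
def placeOp {d a n : ℕ} (w : Fin a → Fin n) (X : Mat d a) : Mat d n :=
  Matrix.of fun f g =>
    if ∀ i : Fin n, (∀ j, w j ≠ i) → f i = g i
    then X (fun j => f (w j)) (fun j => g (w j)) else 0

/-- `U^{⊗N} ⊗ Ū^{⊗k}`. -/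
def Upow (d N k : ℕ) (U : Matrix (Fin d) (Fin d) ℂ) : Mat d (N + k) :=
  Matrix.of fun f g =>
    ∏ i : Fin (N + k),
      if (i : ℕ) < N then U (f i) (g i) else (starRingEnd ℂ) (U (f i) (g i))

/-- A family of concrete unitary irreps of a subgroup `H ⊆ S(n)`. -/
structure SubIrrepFamily (n : ℕ) (H : Subgroup (Equiv.Perm (Fin n))) where
  Label : Type
  [instFintype : Fintype Label]
  [instDecEq : DecidableEq Label]
  dim : Label → ℕ
  rep : ∀ ℓ, H →* Matrix (Fin (dim ℓ)) (Fin (dim ℓ)) ℂ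
  irrep : ∀ ℓ, IsUnitaryIrrep (rep ℓ)

attribute [instance] SubIrrepFamily.instFintype SubIrrepFamily.instDecEq

/-- An irrep of `S(n)` whose basis is adapted to the subgroup `H` (PRIR form). -/
structure PRIRSubData (n : ℕ) (H : Subgroup (Equiv.Perm (Fin n)))
    (Ψ : SubIrrepFamily n H) (e : ℕ) where
  rep : Equiv.Perm (Fin n) →* Matrix (Fin e) (Fin e) ℂ
  irrep : IsUnitaryIrrep rep
  Path : Type
  [instFintypePath : Fintype Path]
  [instDecEqPath : DecidableEq Path]
  endOf : Path → Ψ.Label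
  basis : ((r : Path) × Fin (Ψ.dim (endOf r))) ≃ Fin e
  block_diag : ∀ (h : H) (r : Path) (l l' : Fin (Ψ.dim (endOf r))),
      rep (h : Equiv.Perm (Fin n)) (basis ⟨r, l⟩) (basis ⟨r, l'⟩) = Ψ.rep (endOf r) h l l'
  block_off : ∀ (h : H) (r r' : Path), r ≠ r' →
      ∀ (l : Fin (Ψ.dim (endOf r))) (l' : Fin (Ψ.dim (endOf r'))),
      rep (h : Equiv.Perm (Fin n)) (basis ⟨r, l⟩) (basis ⟨r', l'⟩) = 0

attribute [instance] PRIRSubData.instFintypePath PRIRSubData.instDecEqPath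

/-- A family of pairwise non-isomorphic irreps of `S(n)` in PRIR form relative to `H`. -/
structure PRIRSubFamily (n : ℕ) (H : Subgroup (Equiv.Perm (Fin n)))
    (Ψ : SubIrrepFamily n H) where
  Label : Type
  [instFintype : Fintype Label]
  [instDecEq : DecidableEq Label]
  dim : Label → ℕ
  prir : ∀ ℓ, PRIRSubData n H Ψ (dim ℓ)
  noniso : ∀ ℓ ℓ', ℓ ≠ ℓ' → ∀ T : Matrix (Fin (dim ℓ)) (Fin (dim ℓ')) ℂ,
      (∀ σ, (prir ℓ).rep σ * T = T * (prir ℓ').rep σ) → T = 0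

attribute [instance] PRIRSubFamily.instFintype PRIRSubFamily.instDecEq

end

/-!
An operator `Z` in the span of the permutation operators `V_σ` vanishes as soon as
`tr (Z V_g) = 0` for every `g`, because the Hilbert–Schmidt form `tr (Z Wᴴ)` is definite and
`(V_g)ᴴ = V_{g⁻¹}`. Both sides of the identity lie in that span: writing `τ = (τ(n) n) · σ` with
`σ` fixing `n`, the partial trace over the last factor sends `V_τ` to a multiple of `V_σ`.
Their pairings with `V_g`, `g ∈ S(m - k)`, agree: by Schur's lemma applied to the central element
`∑ τ, tr V_τ • τ⁻¹`, `tr (E^μ_{pq} V_g) = m_μ φ^μ_{qp}(g)`, and the PRIR form turns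
`φ^μ_{(r̃,j),(r,i)}(g)` into `δ^{r r̃} φ^β_{ji}(g)`. Finally `m_β ≠ 0`: by Schur orthogonality the
pairing of `tr_k E^μ_{(r,i),(r,i)}` with `E^β_{ii}` is `m_μ`, while `E^β_{ii} = 0` if `m_β = 0`.
-/

namespace IsUnitaryIrrep

variable {G : Type*} [Group G] {e : ℕ} {φ : G →* Matrix (Fin e) (Fin e) ℂ}

lemma map_inv (hφ : IsUnitaryIrrep φ) (g : G) : φ g⁻¹ = (φ g)ᴴ :=
  (left_inv_eq_right_inv (hφ.1 g) (by rw [← map_mul, mul_inv_cancel, map_one])).symm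

lemma sum_map_inv_mul_mul_map [Fintype G] (hφ : IsUnitaryIrrep φ) (X : Matrix (Fin e) (Fin e) ℂ) :
    ∑ g : G, φ g⁻¹ * X * φ g = ((Fintype.card G : ℂ) / e * X.trace) • 1 := by
  rcases Nat.eq_zero_or_pos e with rfl | he
  · exact Subsingleton.elim _ _
  obtain ⟨c, hc⟩ := hφ.2 (∑ g : G, φ g⁻¹ * X * φ g) fun h => by
    rw [Finset.sum_mul, Finset.mul_sum]
    refine Fintype.sum_equiv (Equiv.mulRight h) _ _ fun g => ?_
    simp only [Equiv.coe_mulRight, _root_.mul_inv_rev, map_mul, ← mul_assoc]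
    rw [← map_mul φ h, mul_inv_cancel, map_one, one_mul]
  have htrace : (Fintype.card G : ℂ) * X.trace = c * e := by
    have := congrArg Matrix.trace hc
    rwa [Matrix.trace_sum, Finset.sum_congr rfl fun g _ => by
      rw [Matrix.trace_mul_cycle, ← map_mul, mul_inv_cancel, map_one, one_mul],
      Finset.sum_const, Finset.card_univ, nsmul_eq_mul, Matrix.trace_smul, Matrix.trace_one,
      Fintype.card_fin, smul_eq_mul] at this
  rw [hc, div_mul_eq_mul_div, htrace, mul_div_cancel_right₀ _ (by exact_mod_cast he.ne')]

lemma sum_map_inv_apply_mul_map_apply [Fintype G] (hφ : IsUnitaryIrrep φ) (p q : Fin e) :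
    ∑ g : G, φ g⁻¹ q p * φ g p q = (Fintype.card G : ℂ) / e := by
  have := congrFun₂ (hφ.sum_map_inv_mul_mul_map (Matrix.single p p 1)) q q
  simpa [Matrix.sum_apply, Matrix.mul_apply, Matrix.single_apply, ite_and] using this

end IsUnitaryIrrep

section Vperm

variable (d n : ℕ)

lemma Vperm_mul (σ τ : Equiv.Perm (Fin n)) : Vperm d n σ * Vperm d n τ = Vperm d n (σ * τ) := by
  ext f h
  simp only [Matrix.mul_apply, Vperm, Matrix.of_apply, ite_mul, one_mul, zero_mul,
    Finset.sum_ite_eq, Finset.mem_univ, if_true]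
  rfl

lemma Vperm_one : Vperm d n 1 = 1 := by
  ext f g
  simp [Vperm, Matrix.one_apply]

lemma Vperm_conjTranspose (σ : Equiv.Perm (Fin n)) : (Vperm d n σ)ᴴ = Vperm d n σ⁻¹ := by
  ext f g
  simp only [Matrix.conjTranspose_apply, Vperm, Matrix.of_apply, apply_ite star, star_one,
    star_zero, Equiv.Perm.inv_def, Equiv.comp_symm_eq]
  simp only [eq_comm]

lemma trace_Vperm (σ : Equiv.Perm (Fin n)) :
    (Vperm d n σ).trace = (Finset.univ.filter fun f : Fin n → Fin d => f ∘ σ = f).card := by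
  simp [Matrix.trace, Vperm, Finset.sum_boole]

lemma star_trace_Vperm (σ : Equiv.Perm (Fin n)) :
    star (Vperm d n σ).trace = (Vperm d n σ).trace := by
  rw [trace_Vperm, star_natCast]

lemma trace_Vperm_inv (σ : Equiv.Perm (Fin n)) : (Vperm d n σ⁻¹).trace = (Vperm d n σ).trace := by
  rw [← Vperm_conjTranspose, Matrix.trace_conjTranspose, star_trace_Vperm]

lemma trace_Vperm_conj (g σ : Equiv.Perm (Fin n)) :
    (Vperm d n (g⁻¹ * σ * g)).trace = (Vperm d n σ).trace := by
  rw [← Vperm_mul, ← Vperm_mul, Matrix.trace_mul_cycle, Vperm_mul, mul_inv_cancel, Vperm_one,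
    one_mul]

end Vperm

section Eop

variable (d m : ℕ) {e : ℕ} (φ : Equiv.Perm (Fin m) →* Matrix (Fin e) (Fin e) ℂ)

/-- `φ` of the central element `∑ τ, tr V_τ • τ⁻¹` of the group algebra, hence a scalar. -/
def traceVpermRep : Matrix (Fin e) (Fin e) ℂ := ∑ τ, (Vperm d m τ).trace • φ τ⁻¹

lemma traceVpermRep_mul_comm (g : Equiv.Perm (Fin m)) :
    traceVpermRep d m φ * φ g = φ g * traceVpermRep d m φ := by
  rw [traceVpermRep, Finset.sum_mul, Finset.mul_sum]
  refine Fintype.sum_equiv ((Equiv.mulLeft g⁻¹).trans (Equiv.mulRight g)) _ _ fun τ => ?_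
  show _ = φ g * ((Vperm d m (g⁻¹ * τ * g)).trace • φ (g⁻¹ * τ * g)⁻¹)
  rw [trace_Vperm_conj, smul_mul_assoc, mul_smul_comm, ← map_mul, ← map_mul]
  congr 2
  group

variable {d m φ}

lemma exists_traceVpermRep_eq_smul_one (hφ : IsUnitaryIrrep φ) :
    ∃ c : ℝ, traceVpermRep d m φ = (c : ℂ) • 1 := by
  obtain ⟨c, hc⟩ := hφ.2 _ (traceVpermRep_mul_comm d m φ)
  have hherm : (traceVpermRep d m φ)ᴴ = traceVpermRep d m φ := by
    rw [traceVpermRep, Matrix.conjTranspose_sum]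
    refine Fintype.sum_equiv (Equiv.inv _) _ _ fun τ => ?_
    rw [Matrix.conjTranspose_smul, star_trace_Vperm, hφ.map_inv, Matrix.conjTranspose_conjTranspose,
      Equiv.inv_apply, inv_inv, trace_Vperm_inv]
  rcases Nat.eq_zero_or_pos e with rfl | he
  · exact ⟨0, Subsingleton.elim _ _⟩
  have hstar : star c = c := by
    simpa [hc] using congrFun₂ hherm ⟨0, he⟩ ⟨0, he⟩
  exact ⟨c.re, by rw [hc, Complex.conj_eq_iff_re.mp hstar]⟩

lemma trace_Eop_mul_Vperm_eq_mul_traceVpermRep (p q : Fin e) (g : Equiv.Perm (Fin m)) :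
    (Eop d m φ p q * Vperm d m g).trace
      = (e : ℂ) / m.factorial * (φ g * traceVpermRep d m φ) q p := by
  simp only [Eop, traceVpermRep, smul_mul_assoc, Finset.sum_mul, Vperm_mul, Matrix.trace_smul,
    Matrix.trace_sum, smul_eq_mul, Matrix.mul_sum, Matrix.sum_apply, mul_smul_comm, ← map_mul,
    Matrix.smul_apply]
  congr 1
  refine Fintype.sum_equiv (Equiv.mulRight g) _ _ fun τ => ?_
  rw [Equiv.coe_mulRight, _root_.mul_inv_rev, mul_inv_cancel_left, mul_comm]

lemma trace_mul_Eop (X : Mat d m) (p q : Fin e) :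
    (X * Eop d m φ p q).trace
      = (e : ℂ) / m.factorial * ∑ σ, φ σ⁻¹ q p * (X * Vperm d m σ).trace := by
  simp only [Eop, mul_smul_comm, Matrix.mul_sum, Matrix.trace_smul, Matrix.trace_sum, smul_eq_mul]

lemma trace_Pop : (Pop d m φ).trace = (e : ℂ) / m.factorial * (traceVpermRep d m φ).trace := by
  simp only [Pop, Eop, traceVpermRep, Matrix.trace_sum, Matrix.trace_smul, smul_eq_mul,
    ← Finset.mul_sum]
  rw [Finset.sum_comm]
  congr 1
  refine Finset.sum_congr rfl fun τ _ => ?_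
  rw [mul_comm, Matrix.trace, Matrix.trace, Finset.sum_mul]
  rfl

lemma trace_Eop_mul_Vperm (hφ : IsUnitaryIrrep φ) (p q : Fin e) (g : Equiv.Perm (Fin m)) :
    (Eop d m φ p q * Vperm d m g).trace = multSW d m φ * φ g q p := by
  obtain ⟨c, hc⟩ := exists_traceVpermRep_eq_smul_one (d := d) hφ
  have he : (e : ℝ) ≠ 0 := Nat.cast_ne_zero.mpr p.pos.ne'
  have hmult : multSW d m φ = e / m.factorial * c := by
    rw [multSW, trace_Pop, hc, Matrix.trace_smul, Matrix.trace_one, Fintype.card_fin, smul_eq_mul]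
    have hreal : (e : ℂ) / m.factorial * (c * e) = ((e / m.factorial * (c * e) : ℝ) : ℂ) := by
      push_cast
      ring
    rw [hreal, Complex.ofReal_re]
    field_simp
  rw [trace_Eop_mul_Vperm_eq_mul_traceVpermRep, hc, mul_smul_comm, mul_one, Matrix.smul_apply,
    hmult, smul_eq_mul]
  push_cast
  ring

end Eop

section PartialTrace

variable {d : ℕ}

lemma splice_eq_append {a b : ℕ} (f : Fin a → Fin d) (t : Fin b → Fin d) :
    splice f t = Fin.append f t := by
  funext i
  refine Fin.addCases (fun i => ?_) (fun j => ?_) i <;> simp [splice]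

lemma sum_splice {a b : ℕ} {M : Type*} [AddCommMonoid M] (F : (Fin (a + b) → Fin d) → M) :
    ∑ f, F f = ∑ f : Fin a → Fin d, ∑ t : Fin b → Fin d, F (splice f t) := by
  simp only [splice_eq_append]
  rw [← (Fin.appendEquiv a b).sum_comp, Fintype.sum_prod_type]
  rfl

lemma exists_splice_eq {a b : ℕ} (F : Fin (a + b) → Fin d) :
    ∃ (f : Fin a → Fin d) (t : Fin b → Fin d), splice f t = F := by
  obtain ⟨⟨f, t⟩, hF⟩ := (Fin.appendEquiv a b).surjective F
  exact ⟨f, t, (splice_eq_append f t).trans hF⟩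

lemma splice_inj {a b : ℕ} {f g : Fin a → Fin d} {s t : Fin b → Fin d} :
    splice f s = splice g t ↔ f = g ∧ s = t := by
  simp only [splice_eq_append]
  exact ((Fin.appendEquiv a b).injective.eq_iff (a := (f, s)) (b := (g, t))).trans Prod.ext_iff

lemma extOp_splice {a b : ℕ} (Y : Mat d a) (f g : Fin a → Fin d) (s t : Fin b → Fin d) :
    extOp (Nat.le_add_right a b) Y (splice f s) (splice g t) = if s = t then Y f g else 0 := by
  have htail : (∀ i : Fin (a + b), a ≤ (i : ℕ) → splice f s i = splice g t i) ↔ s = t := by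
    simp only [splice_eq_append]
    constructor
    · intro h
      funext j
      simpa using h (Fin.natAdd a j) (by simp)
    · rintro rfl i hi
      obtain ⟨j, rfl⟩ : ∃ j : Fin b, Fin.natAdd a j = i :=
        ⟨⟨i - a, by omega⟩, Fin.ext (by simp; omega)⟩
      simp
  simp only [extOp, Matrix.of_apply, htail]
  simp only [splice_eq_append, Fin.append_left']

lemma ptraceLast_mul_extOp {a b : ℕ} (X : Mat d (a + b)) (Y : Mat d a) :
    ptraceLast a b (X * extOp (Nat.le_add_right a b) Y) = ptraceLast a b X * Y := by
  ext f g
  simp only [ptraceLast, Matrix.of_apply, Matrix.mul_apply, Finset.sum_mul]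
  conv_rhs => rw [Finset.sum_comm]
  refine Fintype.sum_congr _ _ fun t => ?_
  rw [sum_splice (M := ℂ)]
  simp only [extOp_splice, mul_ite, mul_zero, Finset.sum_ite_eq', Finset.mem_univ, if_true]

lemma trace_ptraceLast {a b : ℕ} (X : Mat d (a + b)) : (ptraceLast a b X).trace = X.trace := by
  simp only [Matrix.trace, Matrix.diag, ptraceLast, Matrix.of_apply]
  exact (sum_splice fun F => X F F).symm

lemma trace_ptraceLast_mul {a b : ℕ} (X : Mat d (a + b)) (Y : Mat d a) :
    (ptraceLast a b X * Y).trace = (X * extOp (Nat.le_add_right a b) Y).trace := by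
  rw [← ptraceLast_mul_extOp, trace_ptraceLast]

lemma ptraceLast_zero {a : ℕ} (X : Mat d (a + 0)) : ptraceLast a 0 X = X := by
  ext f g
  simp only [ptraceLast, Matrix.of_apply, Fintype.sum_unique, splice_eq_append,
    Fin.append_right_nil _ _ rfl]
  rfl

lemma ptraceLast_succ {a b : ℕ} (X : Mat d (a + (b + 1))) :
    ptraceLast a (b + 1) X = ptraceLast a b (ptraceLast (a + b) 1 X) := by
  ext f g
  simp only [ptraceLast, Matrix.of_apply]
  rw [sum_splice (M := ℂ)]
  simp only [splice_eq_append, Fin.append_assoc]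
  rfl

lemma ptraceLast_one {a b : ℕ} : ptraceLast a b (1 : Mat d (a + b)) = ((d : ℂ) ^ b) • 1 := by
  ext f g
  simp [ptraceLast, Matrix.one_apply, splice_inj]

variable (d) in
@[simps]
def ptraceLastLinearMap (a b : ℕ) : Mat d (a + b) →ₗ[ℂ] Mat d a where
  toFun := ptraceLast a b
  map_add' X Y := by
    ext f g
    simp [ptraceLast, Finset.sum_add_distrib]
  map_smul' c X := by
    ext f g
    simp [ptraceLast, Finset.mul_sum]

lemma ptraceLast_smul {a b : ℕ} (c : ℂ) (X : Mat d (a + b)) :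
    ptraceLast a b (c • X) = c • ptraceLast a b X :=
  (ptraceLastLinearMap d a b).map_smul c X

end PartialTrace

section PermExt

lemma permExt_castLE {m n : ℕ} (h : m ≤ n) (σ : Equiv.Perm (Fin m)) (i : Fin m) :
    permExt h σ (Fin.castLE h i) = Fin.castLE h (σ i) :=
  Equiv.Perm.extendDomain_apply_image σ (finLtEquiv h) i

lemma permExt_apply_of_le {m n : ℕ} (h : m ≤ n) (σ : Equiv.Perm (Fin m)) {x : Fin n}
    (hx : m ≤ (x : ℕ)) : permExt h σ x = x :=
  Equiv.Perm.extendDomain_apply_not_subtype σ (finLtEquiv h) (Nat.not_lt.mpr hx)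

lemma splice_comp_permExt {d a b : ℕ} (σ : Equiv.Perm (Fin a)) (f : Fin a → Fin d)
    (t : Fin b → Fin d) : splice f t ∘ permExt (Nat.le_add_right a b) σ = splice (f ∘ σ) t := by
  funext x
  simp only [splice_eq_append, Function.comp_apply]
  refine Fin.addCases (fun i => ?_) (fun j => ?_) x
  · change Fin.append f t (permExt _ σ (Fin.castLE _ i)) = Fin.append (f ∘ σ) t (Fin.castLE _ i)
    rw [permExt_castLE, Fin.append_left', Fin.append_left', Function.comp_apply]
  · rw [permExt_apply_of_le _ _ (by simp)]
    simp

lemma extOp_Vperm {d a b : ℕ} (σ : Equiv.Perm (Fin a)) :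
    extOp (Nat.le_add_right a b) (Vperm d a σ)
      = Vperm d (a + b) (permExt (Nat.le_add_right a b) σ) := by
  ext F G
  obtain ⟨f, s, rfl⟩ := exists_splice_eq F
  obtain ⟨g, t, rfl⟩ := exists_splice_eq G
  simp only [extOp_splice, Vperm, Matrix.of_apply, splice_comp_permExt, splice_inj]
  by_cases hst : s = t <;> simp [hst]

lemma exists_eq_swap_mul_permExt {n : ℕ} (τ : Equiv.Perm (Fin (n + 1))) :
    ∃ σ : Equiv.Perm (Fin n),
      τ = Equiv.swap (τ (Fin.last n)) (Fin.last n) * permExt (Nat.le_succ n) σ := by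
  set ρ := Equiv.swap (τ (Fin.last n)) (Fin.last n) * τ
  have hlast : ρ (Fin.last n) = Fin.last n := by simp [ρ]
  have hlt : ∀ x, (ρ x : ℕ) < n ↔ (x : ℕ) < n := fun x => by
    have hne : ∀ y : Fin (n + 1), (y : ℕ) < n ↔ y ≠ Fin.last n := fun y => by
      rw [← Fin.lt_last_iff_ne_last, Fin.lt_def, Fin.val_last]
    rw [hne, hne]
    exact ρ.injective.ne_iff' hlast
  set σ := (finLtEquiv (Nat.le_succ n)).symm.permCongr (ρ.subtypePerm hlt)
  refine ⟨σ, ?_⟩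
  suffices permExt (Nat.le_succ n) σ = ρ by rw [this, Equiv.swap_mul_self_mul]
  ext x
  by_cases hx : (x : ℕ) < n
  · obtain ⟨i, rfl⟩ : ∃ i : Fin n, Fin.castLE (Nat.le_succ n) i = x := ⟨⟨x, hx⟩, rfl⟩
    rw [permExt_castLE]
    simp only [σ, finLtEquiv, Equiv.symm_mk, Equiv.permCongr_apply, Equiv.coe_fn_mk,
      Equiv.Perm.subtypePerm_apply, Fin.castLE_mk]
    rfl
  · rw [permExt_apply_of_le _ _ (Nat.not_lt.mp hx)]
    obtain rfl : x = Fin.last n := Fin.ext (by simp; omega)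
    rw [hlast]

end PermExt

section PtraceVperm

variable {d : ℕ}

lemma splice_comp_swap_castSucc_last {n : ℕ} (i : Fin n) (f g : Fin n → Fin d) (t : Fin 1 → Fin d) :
    splice f t ∘ Equiv.swap (Fin.castSucc i) (Fin.last n) = splice g t ↔ f = g ∧ t 0 = f i := by
  simp only [splice_eq_append, Fin.append_right_eq_snoc, funext_iff, Fin.forall_fin_succ',
    Function.comp_apply, Equiv.swap_apply_def, Fin.castSucc_inj, Fin.castSucc_ne_last,
    if_true, (Fin.castSucc_ne_last _).symm, apply_ite (Fin.snoc f (t 0)), Fin.snoc_castSucc,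
    Fin.snoc_last]
  grind

lemma ptraceLast_Vperm_swap_last {n : ℕ} (x : Fin (n + 1)) :
    ptraceLast n 1 (Vperm d (n + 1) (Equiv.swap x (Fin.last n)))
      = if x = Fin.last n then (d : ℂ) • 1 else 1 := by
  split_ifs with hx
  · rw [hx, Equiv.swap_self, ← Equiv.Perm.one_def, Vperm_one, ptraceLast_one, pow_one]
  · obtain ⟨i, rfl⟩ := Fin.exists_castSucc_eq.mpr hx
    ext f g
    simp only [ptraceLast, Vperm, Matrix.of_apply, splice_comp_swap_castSucc_last, Matrix.one_apply]
    refine (Fintype.sum_equiv (Equiv.funUnique (Fin 1) (Fin d)) _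
      (fun c => if f = g ∧ c = f i then (1 : ℂ) else 0) fun _ => rfl).trans ?_
    by_cases hfg : f = g <;> simp [hfg]

lemma exists_ptraceLast_one_Vperm {n : ℕ} (τ : Equiv.Perm (Fin (n + 1))) :
    ∃ (c : ℂ) (σ : Equiv.Perm (Fin n)), ptraceLast n 1 (Vperm d (n + 1) τ) = c • Vperm d n σ := by
  obtain ⟨σ, hσ⟩ := exists_eq_swap_mul_permExt τ
  have hV : Vperm d (n + 1) τ
      = Vperm d (n + 1) (Equiv.swap (τ (Fin.last n)) (Fin.last n)) *
          extOp (Nat.le_add_right n 1) (Vperm d n σ) := by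
    rw [extOp_Vperm, Vperm_mul, ← hσ]
  refine ⟨if τ (Fin.last n) = Fin.last n then d else 1, σ, ?_⟩
  rw [hV, ptraceLast_mul_extOp, ptraceLast_Vperm_swap_last]
  split_ifs <;> simp

lemma exists_ptraceLast_Vperm (a : ℕ) : ∀ (k : ℕ) (τ : Equiv.Perm (Fin (a + k))),
    ∃ (c : ℂ) (σ : Equiv.Perm (Fin a)), ptraceLast a k (Vperm d (a + k) τ) = c • Vperm d a σ
  | 0, τ => ⟨1, τ, by rw [ptraceLast_zero, one_smul]; rfl⟩
  | k + 1, τ => by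
    obtain ⟨c₁, σ₁, h₁⟩ : ∃ (c : ℂ) (σ : Equiv.Perm (Fin (a + k))),
        ptraceLast (a + k) 1 (Vperm d (a + (k + 1)) τ) = c • Vperm d (a + k) σ :=
      exists_ptraceLast_one_Vperm τ
    obtain ⟨c₂, σ₂, h₂⟩ := exists_ptraceLast_Vperm a k σ₁
    exact ⟨c₁ * c₂, σ₂, by rw [ptraceLast_succ, h₁, ptraceLast_smul, h₂, smul_smul]⟩

end PtraceVperm

section VpermSpan

variable {d : ℕ}

variable (d) in
def VpermSpan (n : ℕ) : Submodule ℂ (Mat d n) := Submodule.span ℂ (Set.range (Vperm d n))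

lemma Eop_mem_VpermSpan {m e : ℕ} (φ : Equiv.Perm (Fin m) →* Matrix (Fin e) (Fin e) ℂ)
    (p q : Fin e) : Eop d m φ p q ∈ VpermSpan d m :=
  Submodule.smul_mem _ _ <| Submodule.sum_mem _ fun τ _ =>
    Submodule.smul_mem _ _ (Submodule.subset_span ⟨τ, rfl⟩)

lemma ptraceLast_mem_VpermSpan {a k : ℕ} {X : Mat d (a + k)} (hX : X ∈ VpermSpan d (a + k)) :
    ptraceLast a k X ∈ VpermSpan d a := by
  have hmap : (VpermSpan d (a + k)).map (ptraceLastLinearMap d a k) ≤ VpermSpan d a := by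
    rw [VpermSpan, Submodule.map_span_le]
    rintro _ ⟨τ, rfl⟩
    obtain ⟨c, σ, h⟩ := exists_ptraceLast_Vperm a k τ
    rw [ptraceLastLinearMap_apply, h]
    exact Submodule.smul_mem _ c (Submodule.subset_span ⟨σ, rfl⟩)
  exact hmap (Submodule.mem_map_of_mem hX)

lemma eq_zero_of_mem_VpermSpan {n : ℕ} {Z : Mat d n} (hZ : Z ∈ VpermSpan d n)
    (h : ∀ g, (Z * Vperm d n g).trace = 0) : Z = 0 := by
  have horth : ∀ W ∈ VpermSpan d n, (Z * Wᴴ).trace = 0 := fun W hW => by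
    induction hW using Submodule.span_induction with
    | mem _ hW =>
      obtain ⟨g, rfl⟩ := hW
      rw [Vperm_conjTranspose]
      exact h g⁻¹
    | zero => simp
    | add X Y _ _ hX hY =>
      rw [Matrix.conjTranspose_add, Matrix.mul_add, Matrix.trace_add, hX, hY, add_zero]
    | smul c X _ hX =>
      rw [Matrix.conjTranspose_smul, mul_smul_comm, Matrix.trace_smul, hX, smul_zero]
  exact Matrix.trace_mul_conjTranspose_self_eq_zero_iff.mp (horth Z hZ)

end VpermSpan

namespace PRIRData

variable {d a k : ℕ} {Φ : IrrepFamily a} {e : ℕ} (P : PRIRData a k Φ e)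

lemma trace_ptraceLast_Eop_mul_Vperm (p q : Fin e) (g : Equiv.Perm (Fin a)) :
    (ptraceLast a k (Eop d (a + k) P.rep p q) * Vperm d a g).trace
      = multSW d (a + k) P.rep * P.rep (permExt (Nat.le_add_right a k) g) q p := by
  rw [trace_ptraceLast_mul, extOp_Vperm, trace_Eop_mul_Vperm P.irrep]

lemma multSW_endOf_ne_zero (hm : multSW d (a + k) P.rep ≠ 0) (r : P.Path) :
    multSW d a (Φ.rep (P.endOf r)) ≠ 0 := by
  intro hβ
  set i : Fin (Φ.dim (P.endOf r)) := ⟨0, Φ.dim_pos _⟩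
  have hE : Eop d a (Φ.rep (P.endOf r)) i i = 0 :=
    eq_zero_of_mem_VpermSpan (Eop_mem_VpermSpan _ i i) fun g => by
      rw [trace_Eop_mul_Vperm (Φ.irrep _), hβ, Complex.ofReal_zero, zero_mul]
  have hpair : (ptraceLast a k (Eop d (a + k) P.rep (P.basis ⟨r, i⟩) (P.basis ⟨r, i⟩)) *
      Eop d a (Φ.rep (P.endOf r)) i i).trace = multSW d (a + k) P.rep := by
    simp only [trace_mul_Eop, P.trace_ptraceLast_Eop_mul_Vperm, P.block_diag, mul_left_comm _
      (multSW d (a + k) P.rep : ℂ), ← Finset.mul_sum, (Φ.irrep _).sum_map_inv_apply_mul_map_apply,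
      Fintype.card_perm, Fintype.card_fin]
    have hdim := Φ.dim_pos (P.endOf r)
    field_simp
  rw [hE, Matrix.mul_zero, Matrix.trace_zero] at hpair
  exact hm (by exact_mod_cast hpair.symm)

end PRIRData

theorem statement_7_general (d a k : ℕ)
    (Φ : IrrepFamily a) (e : ℕ) (P : PRIRData a k Φ e)
    (hm : multSW d (a + k) P.rep ≠ 0)
    (r r' : P.Path) (i : Fin (Φ.dim (P.endOf r))) (j : Fin (Φ.dim (P.endOf r'))) :
    ptraceLast a k (Eop d (a + k) P.rep (P.basis ⟨r, i⟩) (P.basis ⟨r', j⟩))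
      = if h : r = r' then
          ((multSW d (a + k) P.rep / multSW d a (Φ.rep (P.endOf r)) : ℝ) : ℂ) •
            Eop d a (Φ.rep (P.endOf r)) i
              (Fin.cast (congrArg Φ.dim (congrArg P.endOf h.symm)) j)
        else 0 := by
  rw [← sub_eq_zero]
  refine eq_zero_of_mem_VpermSpan (Submodule.sub_mem _
    (ptraceLast_mem_VpermSpan (Eop_mem_VpermSpan _ _ _)) ?_) fun g => ?_
  · split_ifs
    exacts [Submodule.smul_mem _ _ (Eop_mem_VpermSpan _ _ _), Submodule.zero_mem _]
  rw [Matrix.sub_mul, Matrix.trace_sub, P.trace_ptraceLast_Eop_mul_Vperm, sub_eq_zero]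
  split_ifs with h
  · subst h
    have hβ := P.multSW_endOf_ne_zero hm r
    rw [smul_mul_assoc, Matrix.trace_smul, trace_Eop_mul_Vperm (Φ.irrep _), P.block_diag,
      smul_eq_mul, Fin.cast_eq_self, Complex.ofReal_div]
    field_simp
  · rw [P.block_off g r' r (Ne.symm h), mul_zero, Matrix.zero_mul, Matrix.trace_zero]

/-- For `k ≥ 1`, `m = a + k ≥ 2k` and an irrep `φ^μ` of `S(m)` with
`m_μ ≠ 0`, in PRIR form relative to the chain `S(m) ⊃ ⋯ ⊃ S(m-k)`, the partial
trace over the last `k` factors satisfies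
`tr_{m-k+1,…,m} E^μ_{(r,i),(r̃,j)} = δ^{r,r̃}·(m_μ/m_β)·E^β_{i j}`. -/
theorem statement_7 (d a k : ℕ) (hd : 2 ≤ d) (hk : 1 ≤ k) (hka : k ≤ a)
    (Φ : IrrepFamily a) (e : ℕ) (P : PRIRData a k Φ e)
    (hm : multSW d (a + k) P.rep ≠ 0)
    (r r' : P.Path) (i : Fin (Φ.dim (P.endOf r))) (j : Fin (Φ.dim (P.endOf r'))) :
    ptraceLast a k (Eop d (a + k) P.rep (P.basis ⟨r, i⟩) (P.basis ⟨r', j⟩))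
      = if h : r = r' then
          ((multSW d (a + k) P.rep / multSW d a (Φ.rep (P.endOf r)) : ℝ) : ℂ) •
            Eop d a (Φ.rep (P.endOf r)) i
              (Fin.cast (congrArg Φ.dim (congrArg P.endOf h.symm)) j)
        else 0 :=
  statement_7_general d a k Φ e P hm r r' i j
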